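/- arXiv:1702.00802 — 6 statements merged into one kernel-verified Lean document; each statement's English description precedes it below -/
import Mathlib

section
/- Let t be an odd integer and let b be the smallest positive integer such that t ≢ ±1 (mod 2^b). Then t^2 ≡ 2^b + 1 (mod 2^(b+1)). -/
/-!
Minimality of `b` gives `t ≡ ε (mod 2^(b-1))` with `ε = ±1` but not modulo `2^b`, so
`t ≡ ε + 2^(b-1) (mod 2^b)`. Squaring raises the modulus by one factor of `2`, and
`(ε + 2^(b-1))^2 = 1 + ε 2^b + 2^(2b-2) ≡ 1 + 2^b (mod 2^(b+1))` once `b ≥ 3`, which holds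
because every odd number is `±1` modulo `4`.
-/

theorem Int.modEq_one_or_modEq_neg_one_of_odd {t : ℤ} (ht : Odd t) {b : ℕ} (hb : b ≤ 2) :
    t ≡ 1 [ZMOD 2 ^ b] ∨ t ≡ -1 [ZMOD 2 ^ b] := by
  obtain ⟨k, rfl⟩ := ht
  interval_cases b <;> simp only [Int.ModEq] <;> omega

theorem Int.sq_modEq_sq_of_modEq_two_pow {a c : ℤ} {k : ℕ} (hk : k ≠ 0)
    (h : a ≡ c [ZMOD 2 ^ k]) : a ^ 2 ≡ c ^ 2 [ZMOD 2 ^ (k + 1)] := by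
  have hdiff : 2 ^ k ∣ c - a := Int.modEq_iff_dvd.mp h
  have hsum : 2 ∣ c + a := by
    rw [show c + a = (c - a) + 2 * a by ring]
    exact ((dvd_pow_self 2 hk).trans hdiff).add (dvd_mul_right 2 a)
  rw [Int.modEq_iff_dvd, sq_sub_sq, pow_succ']
  exact mul_dvd_mul hsum hdiff

theorem Int.modEq_add_two_pow_of_modEq_of_not_modEq {t ε : ℤ} {n : ℕ} (h : t ≡ ε [ZMOD 2 ^ n])
    (h' : ¬t ≡ ε [ZMOD 2 ^ (n + 1)]) : t ≡ ε + 2 ^ n [ZMOD 2 ^ (n + 1)] := by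
  obtain ⟨m, hm⟩ := Int.modEq_iff_dvd.mp h.symm
  rcases Int.even_or_odd m with ⟨j, rfl⟩ | ⟨j, rfl⟩
  · exact absurd (Int.modEq_iff_dvd.mpr ⟨j, by linear_combination hm⟩).symm h'
  · exact (Int.modEq_iff_dvd.mpr ⟨j, by linear_combination hm⟩).symm

theorem Int.sign_add_two_pow_sq_modEq {ε : ℤ} (hε : ε = 1 ∨ ε = -1) (k : ℕ) :
    (ε + 2 ^ (k + 2)) ^ 2 ≡ 2 ^ (k + 3) + 1 [ZMOD 2 ^ (k + 4)] := by
  rw [Int.modEq_iff_dvd]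
  rcases hε with rfl | rfl
  · exact ⟨-2 ^ k, by ring⟩
  · exact ⟨1 - 2 ^ k, by ring⟩

theorem tsq_mod_2pow (t : ℤ) (ht : Odd t) (b : ℕ)
    (hb : IsLeast {b : ℕ | 0 < b ∧
      ¬(t ≡ 1 [ZMOD (2 ^ b : ℤ)] ∨ t ≡ -1 [ZMOD (2 ^ b : ℤ)])} b) :
    t ^ 2 ≡ 2 ^ b + 1 [ZMOD (2 ^ (b + 1) : ℤ)] := by
  obtain ⟨⟨-, hbt⟩, hmin⟩ := hb
  obtain ⟨k, rfl⟩ : ∃ k, b = k + 3 := by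
    refine ⟨b - 3, ?_⟩
    by_contra
    exact hbt (Int.modEq_one_or_modEq_neg_one_of_odd ht (by omega))
  have hprev : t ≡ 1 [ZMOD 2 ^ (k + 2)] ∨ t ≡ -1 [ZMOD 2 ^ (k + 2)] := by
    by_contra h
    have := hmin (show k + 2 ∈ _ from ⟨by omega, h⟩)
    omega
  obtain ⟨ε, hε, htε⟩ : ∃ ε : ℤ, (ε = 1 ∨ ε = -1) ∧ t ≡ ε [ZMOD 2 ^ (k + 2)] := by
    rcases hprev with h | h
    exacts [⟨1, .inl rfl, h⟩, ⟨-1, .inr rfl, h⟩]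
  have hnext : ¬t ≡ ε [ZMOD 2 ^ (k + 3)] := by
    rcases hε with rfl | rfl <;> tauto
  calc t ^ 2 ≡ (ε + 2 ^ (k + 2)) ^ 2 [ZMOD 2 ^ (k + 4)] :=
        Int.sq_modEq_sq_of_modEq_two_pow (by omega)
          (Int.modEq_add_two_pow_of_modEq_of_not_modEq htε hnext)
    _ ≡ 2 ^ (k + 3) + 1 [ZMOD 2 ^ (k + 4)] := Int.sign_add_two_pow_sq_modEq hε k
end

section
/- Let t be an odd integer and let b be the smallest positive integer such that t ≢ ±1 (mod 2^b). Then for all integers k ≥ 1, t^(2^k) ≡ 2^(k+b-1) + 1 (mod 2^(k+b)). -/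
/-!
Replacing `t` by `-t` if necessary (which changes no even power), minimality of `b` gives
`t ≡ 1 + 2^(b-1) [ZMOD 2^b]`, and `b ≥ 3` because every odd number is `±1` modulo `4`.
From `x ≡ 1 + 2^n [ZMOD 2^(n+1)]` with `n ≥ 2` squaring gives `x² ≡ 1 + 2^(n+1) [ZMOD 2^(n+2)]`,
so `k` squarings give the claim.
-/

namespace Int

theorem ModEq.sq_two_mul {a b m : ℤ} (hm : 2 ∣ m) (h : a ≡ b [ZMOD m]) :
    a ^ 2 ≡ b ^ 2 [ZMOD 2 * m] := by
  obtain ⟨c, hc⟩ := modEq_iff_dvd.mp h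
  obtain ⟨d, rfl⟩ := hm
  rw [modEq_iff_dvd]
  -- `b² - a² = (b - a)(b + a)`, and `b + a = 2a + (b - a)` is even because `2 ∣ m ∣ b - a`
  exact ⟨c * (a + d * c), by linear_combination (b + a + 2 * d * c) * hc⟩

theorem modEq_add_two_pow_of_not_modEq {a c : ℤ} {n : ℕ} (h : a ≡ c [ZMOD 2 ^ n])
    (hn : ¬a ≡ c [ZMOD 2 ^ (n + 1)]) : a ≡ c + 2 ^ n [ZMOD 2 ^ (n + 1)] := by
  obtain ⟨m, hm⟩ := modEq_iff_dvd.mp h.symm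
  obtain ⟨j, rfl | rfl⟩ := m.even_or_odd'
  · exact absurd (modEq_iff_dvd.mpr ⟨j, by rw [hm]; ring⟩).symm hn
  · exact (modEq_iff_dvd.mpr ⟨j, by rw [pow_succ]; linear_combination hm⟩).symm

theorem sq_modEq_one_add_two_pow {x : ℤ} {n : ℕ} (hn : 2 ≤ n)
    (hx : x ≡ 1 + 2 ^ n [ZMOD 2 ^ (n + 1)]) : x ^ 2 ≡ 1 + 2 ^ (n + 1) [ZMOD 2 ^ (n + 2)] := by
  have hsq : x ^ 2 ≡ (1 + 2 ^ n) ^ 2 [ZMOD 2 ^ (n + 2)] := by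
    simpa [pow_succ, mul_comm] using hx.sq_two_mul (dvd_pow_self 2 (by omega))
  refine hsq.trans (modEq_iff_dvd.mpr ⟨-2 ^ (n - 2), ?_⟩)
  obtain ⟨m, rfl⟩ := Nat.exists_eq_add_of_le' hn
  simp only [Nat.add_sub_cancel]
  ring

theorem pow_two_pow_modEq_one_add_two_pow {x : ℤ} {n : ℕ} (hn : 2 ≤ n)
    (hx : x ≡ 1 + 2 ^ n [ZMOD 2 ^ (n + 1)]) (k : ℕ) :
    x ^ 2 ^ k ≡ 1 + 2 ^ (n + k) [ZMOD 2 ^ (n + k + 1)] := by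
  induction k with
  | zero => simpa using hx
  | succ k ih =>
    rw [pow_succ 2 k, pow_mul, ← add_assoc]
    exact sq_modEq_one_add_two_pow (by omega) ih

theorem modEq_one_or_neg_one_two_pow_of_odd {t : ℤ} (ht : Odd t) {b : ℕ} (hb : b ≤ 2) :
    t ≡ 1 [ZMOD 2 ^ b] ∨ t ≡ -1 [ZMOD 2 ^ b] := by
  obtain ⟨m, rfl⟩ := ht
  interval_cases b <;> simp only [ModEq] <;> omega

end Int

open Int

theorem tpow_mod_2pow (t : ℤ) (ht : Odd t) (b : ℕ)
    (hb : IsLeast {b : ℕ | 0 < b ∧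
      ¬(t ≡ 1 [ZMOD (2 ^ b : ℤ)] ∨ t ≡ -1 [ZMOD (2 ^ b : ℤ)])} b) :
    ∀ k : ℕ, 1 ≤ k →
      t ^ (2 ^ k) ≡ 2 ^ (k + b - 1) + 1 [ZMOD (2 ^ (k + b) : ℤ)] := by
  obtain ⟨⟨-, hbt⟩, hmin⟩ := hb
  have hb3 : 3 ≤ b := by
    by_contra! h
    exact hbt (modEq_one_or_neg_one_two_pow_of_odd ht (by omega))
  obtain ⟨n, rfl⟩ := Nat.exists_eq_add_of_le' (by omega : 1 ≤ b)
  have hn : t ≡ 1 [ZMOD 2 ^ n] ∨ t ≡ -1 [ZMOD 2 ^ n] := by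
    by_contra h
    exact absurd (hmin ⟨by omega, h⟩) (by omega)
  obtain ⟨s, hs, hst⟩ : ∃ s, s ≡ 1 + 2 ^ n [ZMOD 2 ^ (n + 1)] ∧ (s = t ∨ s = -t) := by
    rcases hn with h | h
    · exact ⟨t, modEq_add_two_pow_of_not_modEq h (hbt <| .inl ·), .inl rfl⟩
    · refine ⟨-t, modEq_add_two_pow_of_not_modEq (neg_modEq_neg.mpr h) ?_, .inr rfl⟩
      exact fun h' => hbt (.inr (by simpa using neg_modEq_neg.mpr h'))
  intro k hk
  have hpow : s ^ 2 ^ k = t ^ 2 ^ k := by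
    rcases hst with rfl | rfl
    exacts [rfl, (Nat.even_pow.mpr ⟨even_two, by omega⟩).neg_pow t]
  rw [← hpow, show k + (n + 1) - 1 = n + k by omega, show k + (n + 1) = n + k + 1 by omega,
    add_comm _ (1 : ℤ)]
  exact pow_two_pow_modEq_one_add_two_pow (by omega) hs k
end

section
/- Let t be an odd integer and let b be the smallest positive integer such that t ≢ ±1 (mod 2^b). Then for all k ≥ 1, (t^2)^(2^(k-1)) ≢ 1 (mod 2^(k+b)). -/
/-!
Since `t - 1` and `t + 1` are even and differ by `2`, one of them is exactly divisible by `2`, so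
`2 ^ (n + 1) ∣ t ^ 2 - 1` exactly when `t ≡ ±1 [ZMOD 2 ^ n]`. Minimality of `b` therefore says that
`2 ^ b` exactly divides `t ^ 2 - 1`, and the lifting-the-exponent lemma at `p = 2` gives that
`2 ^ (b + k - 1)` exactly divides `(t ^ 2) ^ 2 ^ (k - 1) - 1`.
-/

theorem Prime.pow_dvd_mul_add_one_iff {p : ℤ} (hp : Prime p) (m : ℤ) (j : ℕ) :
    p ^ j ∣ m * (m + 1) ↔ p ^ j ∣ m ∨ p ^ j ∣ m + 1 := by
  refine ⟨fun h => ?_, fun h => h.elim (Dvd.dvd.mul_right · _) (Dvd.dvd.mul_left · _)⟩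
  by_cases hm : p ∣ m
  · have hm1 : ¬p ∣ m + 1 := fun h1 => hp.not_dvd_one (by simpa using dvd_sub h1 hm)
    exact Or.inl (hp.pow_dvd_of_dvd_mul_right j hm1 h)
  · exact Or.inr (hp.pow_dvd_of_dvd_mul_left j hm h)

theorem Int.two_pow_succ_dvd_sq_sub_one_iff {t : ℤ} (ht : Odd t) (n : ℕ) :
    2 ^ (n + 1) ∣ t ^ 2 - 1 ↔ t ≡ 1 [ZMOD 2 ^ n] ∨ t ≡ -1 [ZMOD 2 ^ n] := by
  obtain ⟨m, rfl⟩ := ht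
  rcases n with _ | j
  · simp [Int.modEq_one, ← even_iff_two_dvd, parity_simps]
  have hpow : (2 : ℤ) ^ (j + 1 + 1) = 2 ^ 2 * 2 ^ j := by ring
  have hsq : (2 * m + 1) ^ 2 - 1 = 2 ^ 2 * (m * (m + 1)) := by ring
  have hsub : 1 - (2 * m + 1) = -(2 * m) := by ring
  have hadd : -1 - (2 * m + 1) = -(2 * (m + 1)) := by ring
  rw [Int.modEq_iff_dvd, Int.modEq_iff_dvd, hpow, hsq, hsub, hadd, dvd_neg, dvd_neg,
    pow_succ' (2 : ℤ) j, mul_dvd_mul_iff_left (by norm_num), mul_dvd_mul_iff_left (by norm_num),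
    mul_dvd_mul_iff_left (by norm_num), Int.prime_two.pow_dvd_mul_add_one_iff]

theorem Int.emultiplicity_two_sq_sub_one {t : ℤ} (ht : Odd t) {n : ℕ}
    (hn : t ≡ 1 [ZMOD 2 ^ n] ∨ t ≡ -1 [ZMOD 2 ^ n])
    (hn' : ¬(t ≡ 1 [ZMOD 2 ^ (n + 1)] ∨ t ≡ -1 [ZMOD 2 ^ (n + 1)])) :
    emultiplicity 2 (t ^ 2 - 1) = (n + 1 : ℕ) :=
  emultiplicity_eq_coe.mpr ⟨(two_pow_succ_dvd_sq_sub_one_iff ht n).mpr hn,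
    mt (two_pow_succ_dvd_sq_sub_one_iff ht (n + 1)).mp hn'⟩

theorem tsq_pow_not_one (t : ℤ) (ht : Odd t) (b : ℕ)
    (hb : IsLeast {b : ℕ | 0 < b ∧
      ¬(t ≡ 1 [ZMOD (2 ^ b : ℤ)] ∨ t ≡ -1 [ZMOD (2 ^ b : ℤ)])} b) :
    ∀ k : ℕ, 1 ≤ k →
      ¬((t ^ 2) ^ (2 ^ (k - 1)) ≡ 1 [ZMOD (2 ^ (k + b) : ℤ)]) := by
  obtain ⟨⟨hb_pos, hb_not⟩, hb_min⟩ := hb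
  obtain ⟨n, rfl⟩ := Nat.exists_eq_add_one_of_ne_zero hb_pos.ne'
  have hn : t ≡ 1 [ZMOD 2 ^ n] ∨ t ≡ -1 [ZMOD 2 ^ n] := by
    rcases n.eq_zero_or_pos with rfl | hn_pos
    · simp [Int.modEq_one]
    · by_contra h
      have := hb_min ⟨hn_pos, h⟩
      omega
  have h4_dvd : 4 ∣ t ^ 2 - 1 := dvd_trans (by norm_num) (Int.eight_dvd_sq_sub_one_of_odd ht)
  have h2_not_dvd : ¬2 ∣ t ^ 2 := by rw [← even_iff_two_dvd, Int.not_even_iff_odd]; exact ht.pow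
  intro k hk hcong
  have hlte := Int.two_pow_two_pow_sub_pow_two_pow (k - 1) h4_dvd h2_not_dvd
  rw [one_pow, Int.emultiplicity_two_sq_sub_one ht hn hb_not] at hlte
  have hdvd := hcong.symm.dvd
  rw [pow_dvd_iff_le_emultiplicity, hlte] at hdvd
  norm_cast at hdvd
  omega
end

section
/- Let t be an odd integer and let b be the smallest positive integer such that t ≢ ±1 (mod 2^b). Then for all k ≥ 1, the multiplicative order of t^2 modulo 2^(k+b) is exactly 2^k. -/
/-! Minimality of `b` gives `t ≡ ±1 [ZMOD 2 ^ (b - 1)]` but not modulo `2 ^ b`, and `b ≥ 3` because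
every odd integer is `±1` modulo `4`. Squaring then yields `t ^ 2 = 1 + 2 ^ b * v` with `v` odd, and
each further squaring raises the exact power of `2` dividing `t ^ (2 ^ (j + 1)) - 1` by one. -/

theorem Int.modEq_one_or_neg_one_four_of_odd {t : ℤ} (ht : Odd t) :
    t ≡ 1 [ZMOD 4] ∨ t ≡ -1 [ZMOD 4] := by
  obtain ⟨m, rfl⟩ := ht
  simp only [Int.ModEq]
  omega

theorem Int.exists_odd_sq_eq_one_add_two_pow_mul {t ε : ℤ} (hε : ε ^ 2 = 1) {n : ℕ} (hn : 2 ≤ n)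
    (h : t ≡ ε [ZMOD 2 ^ n]) (hne : ¬t ≡ ε [ZMOD 2 ^ (n + 1)]) :
    ∃ v : ℤ, Odd v ∧ t ^ 2 = 1 + 2 ^ (n + 1) * v := by
  obtain ⟨m, rfl⟩ := Nat.exists_eq_add_of_le' hn
  obtain ⟨u, hu⟩ := Int.modEq_iff_dvd.mp h.symm
  have hu_odd : Odd u := by
    refine Int.not_even_iff_odd.mp fun ⟨q, hq⟩ => hne (Int.modEq_iff_dvd.mpr ⟨q, ?_⟩).symm
    rw [hu, hq]; ring
  have hε_odd : Odd ε := (Int.odd_pow' two_ne_zero).mp (hε ▸ odd_one)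
  refine ⟨ε * u + 2 ^ (m + 1) * u ^ 2, (hε_odd.mul hu_odd).add_even ⟨2 ^ m * u ^ 2, by ring⟩, ?_⟩
  obtain rfl : t = ε + 2 ^ (m + 2) * u := by linarith
  linear_combination hε

theorem Int.exists_odd_one_add_two_pow_mul_pow_two_pow {n : ℕ} (hn : 2 ≤ n) {v : ℤ} (hv : Odd v)
    (j : ℕ) : ∃ w : ℤ, Odd w ∧ (1 + 2 ^ n * v) ^ 2 ^ j = 1 + 2 ^ (n + j) * w := by
  obtain ⟨m, rfl⟩ := Nat.exists_eq_add_of_le' hn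
  induction j with
  | zero => exact ⟨v, hv, by simp⟩
  | succ j ih =>
    obtain ⟨w, hw, hpow⟩ := ih
    refine ⟨w + 2 ^ (m + j + 1) * w ^ 2, hw.add_even ⟨2 ^ (m + j) * w ^ 2, by ring⟩, ?_⟩
    rw [pow_succ 2 j, pow_mul, hpow]
    ring

theorem ZMod.intCast_one_add_two_pow_mul_odd_eq_one_iff {m N : ℕ} {w : ℤ} (hw : Odd w) :
    ((1 + 2 ^ m * w : ℤ) : ZMod (2 ^ N)) = 1 ↔ N ≤ m := by
  rw [Int.cast_add, Int.cast_one, add_eq_left, ZMod.intCast_zmod_eq_zero_iff_dvd, Nat.cast_pow,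
    Nat.cast_ofNat]
  refine ⟨fun hdvd => ?_, fun hle => (pow_dvd_pow 2 hle).mul_right w⟩
  by_contra! hlt
  have h2 : (2 : ℤ) ^ m * 2 ∣ 2 ^ m * w := (pow_dvd_pow 2 hlt).trans hdvd
  exact Int.not_even_iff_odd.mpr hw
    (even_iff_two_dvd.mpr ((mul_dvd_mul_iff_left (pow_ne_zero m two_ne_zero)).mp h2))

theorem ZMod.orderOf_intCast_one_add_two_pow_mul_odd {n : ℕ} (hn : 2 ≤ n) {v : ℤ} (hv : Odd v)
    (k : ℕ) : orderOf ((1 + 2 ^ n * v : ℤ) : ZMod (2 ^ (n + k))) = 2 ^ k := by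
  have hpow : ∀ j, ∃ w : ℤ, Odd w ∧ ((1 + 2 ^ n * v : ℤ) : ZMod (2 ^ (n + k))) ^ 2 ^ j =
      ((1 + 2 ^ (n + j) * w : ℤ) : ZMod (2 ^ (n + k))) := fun j => by
    obtain ⟨w, hw, h⟩ := Int.exists_odd_one_add_two_pow_mul_pow_two_pow hn hv j
    exact ⟨w, hw, by rw [← Int.cast_pow, h]⟩
  have hfin : ((1 + 2 ^ n * v : ℤ) : ZMod (2 ^ (n + k))) ^ 2 ^ k = 1 := by
    obtain ⟨w, hw, h⟩ := hpow k
    rw [h, intCast_one_add_two_pow_mul_odd_eq_one_iff hw]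
  cases k with
  | zero => simpa using hfin
  | succ k =>
    refine orderOf_eq_prime_pow ?_ hfin
    obtain ⟨w, hw, h⟩ := hpow k
    rw [h, intCast_one_add_two_pow_mul_odd_eq_one_iff hw]
    omega

theorem tsq_order (t : ℤ) (ht : Odd t) (b : ℕ)
    (hb : IsLeast {b : ℕ | 0 < b ∧
      ¬(t ≡ 1 [ZMOD (2 ^ b : ℤ)] ∨ t ≡ -1 [ZMOD (2 ^ b : ℤ)])} b) :
    ∀ k : ℕ, 1 ≤ k →
      orderOf ((t : ZMod (2 ^ (k + b))) ^ 2) = 2 ^ k := by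
  obtain ⟨⟨hb0, hbne⟩, hmin⟩ := hb
  have hb3 : 3 ≤ b := by
    by_contra! hlt
    have h4 : (2 ^ b : ℤ) ∣ 4 := (pow_dvd_pow 2 (by omega : b ≤ 2)).trans (by norm_num)
    exact hbne ((Int.modEq_one_or_neg_one_four_of_odd ht).imp (·.of_dvd h4) (·.of_dvd h4))
  obtain ⟨n, rfl⟩ : ∃ n, b = n + 1 := ⟨b - 1, by omega⟩
  have hprev : t ≡ 1 [ZMOD 2 ^ n] ∨ t ≡ -1 [ZMOD 2 ^ n] := by
    by_contra h
    have := hmin ⟨by omega, h⟩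
    omega
  obtain ⟨v, hv, htv⟩ : ∃ v : ℤ, Odd v ∧ t ^ 2 = 1 + 2 ^ (n + 1) * v := by
    rw [not_or] at hbne
    rcases hprev with h | h
    · exact Int.exists_odd_sq_eq_one_add_two_pow_mul (by norm_num) (by omega) h hbne.1
    · exact Int.exists_odd_sq_eq_one_add_two_pow_mul (by norm_num) (by omega) h hbne.2
  intro k _
  rw [← Int.cast_pow, htv, add_comm k]
  exact ZMod.orderOf_intCast_one_add_two_pow_mul_odd (by omega) hv k
end

section
/- Let t be an odd integer and let b be the smallest positive integer such that t ≢ ±1 (mod 2^b). Then for every k ≥ 1 and every i ≥ 0, the 2^k integers (t^2)^i, (t^2)^(i+1), ..., (t^2)^(i+2^k-1) are pairwise incongruent modulo 2^(k+b). -/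
/-!
Since `t - 1` and `t + 1` are even and differ by `2`, one of them is twice an odd number, so
`2 ^ (b + 1) ∣ t ^ 2 - 1` would force `t ≡ ±1 [ZMOD 2 ^ b]`; hence `v₂(t ^ 2 - 1) ≤ b`. By the
lifting-the-exponent lemma, `v₂((t ^ 2) ^ d - 1) = v₂(t ^ 2 - 1) + v₂(d) < b + k` whenever
`0 < d < 2 ^ k`. As `t ^ 2` is a unit modulo `2 ^ (k + b)`, a congruence
`(t ^ 2) ^ (i + r) ≡ (t ^ 2) ^ (i + s)` with `r < s` would give `(t ^ 2) ^ (s - r) ≡ 1`.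
-/

theorem Int.two_pow_dvd_of_two_pow_succ_dvd_two_mul_odd_mul {n : ℕ} {o x : ℤ} (ho : Odd o)
    (h : 2 ^ (n + 1) ∣ 2 * o * x) : 2 ^ n ∣ x := by
  rw [pow_succ', mul_assoc] at h
  have hco : IsCoprime (2 ^ n : ℤ) o := (Int.isCoprime_two_left.2 ho).pow_left
  exact hco.dvd_of_dvd_mul_left (Int.dvd_of_mul_dvd_mul_left two_ne_zero h)

theorem Int.modEq_one_or_neg_one_of_two_pow_succ_dvd_sq_sub_one {t : ℤ} {n : ℕ} (ht : Odd t)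
    (h : 2 ^ (n + 1) ∣ t ^ 2 - 1) : t ≡ 1 [ZMOD 2 ^ n] ∨ t ≡ -1 [ZMOD 2 ^ n] := by
  obtain ⟨m, rfl⟩ := ht
  simp only [Int.modEq_comm (a := 2 * m + 1), Int.modEq_iff_dvd]
  rcases Int.even_or_odd m with hm | hm
  · refine .inl (Int.two_pow_dvd_of_two_pow_succ_dvd_two_mul_odd_mul hm.add_one ?_)
    convert h using 1; ring
  · refine .inr (Int.two_pow_dvd_of_two_pow_succ_dvd_two_mul_odd_mul hm ?_)
    convert h using 1; ring

theorem Int.not_two_pow_dvd_pow_sub_one {x : ℤ} {b k d : ℕ} (hx : 4 ∣ x - 1)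
    (hxb : ¬2 ^ (b + 1) ∣ x - 1) (hd : 0 < d) (hdk : d < 2 ^ k) : ¬2 ^ (k + b) ∣ x ^ d - 1 := by
  have hd2 : ¬(2 : ℤ) ^ k ∣ d := fun h => by
    have := Int.le_of_dvd (by positivity) h
    exact_mod_cast this.not_gt (by exact_mod_cast hdk)
  rw [← emultiplicity_lt_iff_not_dvd] at hxb hd2 ⊢
  have lte := Int.two_pow_sub_pow' (y := 1) d hx (by omega)
  rw [one_pow] at lte
  rw [lte, Nat.cast_add, add_comm (k : ℕ∞)]
  exact ENat.add_lt_add_of_le_of_lt (hxb.trans (ENat.natCast_lt_top _)).ne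
    (Order.le_of_lt_add_one hxb) hd2

theorem Int.dvd_pow_sub_one_of_pow_add_modEq {m x : ℤ} {i r s : ℕ} (hmx : IsCoprime m x)
    (hrs : r ≤ s) (h : x ^ (i + r) ≡ x ^ (i + s) [ZMOD m]) : m ∣ x ^ (s - r) - 1 := by
  refine (hmx.pow_right (n := i + r)).dvd_of_dvd_mul_left ?_
  rw [mul_sub, ← pow_add, mul_one, show i + r + (s - r) = i + s by omega]
  exact h.dvd

theorem tsq_powers_incongruent (t : ℤ) (ht : Odd t) (b : ℕ)
    (hb : IsLeast {b : ℕ | 0 < b ∧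
      ¬(t ≡ 1 [ZMOD (2 ^ b : ℤ)] ∨ t ≡ -1 [ZMOD (2 ^ b : ℤ)])} b) :
    ∀ k : ℕ, 1 ≤ k → ∀ i : ℕ, ∀ r s : ℕ, r < 2 ^ k → s < 2 ^ k → r ≠ s →
      ¬((t ^ 2) ^ (i + r) ≡ (t ^ 2) ^ (i + s) [ZMOD (2 ^ (k + b) : ℤ)]) := by
  intro k _ i r s hr hs hrs h
  wlog hlt : r < s generalizing r s
  · exact this s r hs hr hrs.symm h.symm (by omega)
  have hsq : ¬2 ^ (b + 1) ∣ t ^ 2 - 1 := fun hdvd =>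
    hb.1.2 (Int.modEq_one_or_neg_one_of_two_pow_succ_dvd_sq_sub_one ht hdvd)
  have h4 : 4 ∣ t ^ 2 - 1 := dvd_trans (by norm_num) (Int.eight_dvd_sq_sub_one_of_odd ht)
  have hcop : IsCoprime (2 ^ (k + b) : ℤ) (t ^ 2) := (Int.isCoprime_two_left.2 ht).pow
  exact Int.not_two_pow_dvd_pow_sub_one h4 hsq (by omega) (by omega)
    (Int.dvd_pow_sub_one_of_pow_add_modEq hcop hlt.le h)
end

section
/- Let t be an odd integer and let b be the smallest positive integer such that t ≢ ±1 (mod 2^b). For every k ≥ 0 and every i ≥ 0, the 2^k integers ((t^2)^(i+r) - 1)/2^b for r = 0, 1, ..., 2^k - 1 are pairwise incongruent modulo 2^k. -/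
/-!
For odd `t` we have `t ≡ ±1 [ZMOD 2 ^ c]` iff `2 ^ (c + 1) ∣ t ^ 2 - 1`, so the minimality of `b`
says exactly that the 2-adic valuation of `t ^ 2 - 1` is `b`. By lifting the exponent,
`v₂((t ^ 2) ^ d - 1) = b + v₂(d) < b + k` whenever `0 < d < 2 ^ k`. Congruent quotients for
`r < s` would give `2 ^ (b + k) ∣ (t ^ 2) ^ (i + r) * ((t ^ 2) ^ (s - r) - 1)`, and `t` is odd.
-/

theorem Int.two_pow_dvd_sub_one_of_dvd_sq_sub_one {t w : ℤ} {c : ℕ} (hw : Odd w)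
    (htw : t + 1 = 2 * w) (h : 2 ^ (c + 1) ∣ t ^ 2 - 1) : 2 ^ c ∣ t - 1 := by
  have hsq : t ^ 2 - 1 = 2 * (w * (t - 1)) := by linear_combination (t - 1) * htw
  rw [hsq, pow_succ'] at h
  exact ((Int.isCoprime_two_left.mpr hw).pow_left).dvd_of_dvd_mul_left
    (Int.dvd_of_mul_dvd_mul_left two_ne_zero h)

theorem Int.modEq_one_or_neg_one_iff_two_pow_succ_dvd {t : ℤ} (ht : Odd t) (c : ℕ) :
    (t ≡ 1 [ZMOD 2 ^ c] ∨ t ≡ -1 [ZMOD 2 ^ c]) ↔ 2 ^ (c + 1) ∣ t ^ 2 - 1 := by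
  constructor
  · rintro (h | h)
    · rw [show t ^ 2 - 1 = (t - 1) * (t + 1) by ring, pow_succ]
      exact mul_dvd_mul h.symm.dvd (even_iff_two_dvd.mp ht.add_one)
    · rw [show t ^ 2 - 1 = (t - -1) * (t - 1) by ring, pow_succ]
      exact mul_dvd_mul h.symm.dvd (even_iff_two_dvd.mp (ht.sub_odd odd_one))
  · intro h
    obtain ⟨m, rfl⟩ := ht
    -- one of `t + 1` and `-t + 1` is twice an odd number
    rcases Int.even_or_odd m with hm | hm
    · left
      exact Int.modEq_iff_dvd.mpr (dvd_sub_comm.mp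
        (Int.two_pow_dvd_sub_one_of_dvd_sq_sub_one hm.add_one (by ring) h))
    · right
      have := Int.two_pow_dvd_sub_one_of_dvd_sq_sub_one (t := -(2 * m + 1)) hm.neg
        (by ring) (by rwa [neg_sq])
      exact Int.modEq_iff_dvd.mpr (by simpa [sub_eq_add_neg, add_comm] using this)

theorem Int.ediv_modEq_ediv_iff {m n a b : ℤ} (hm : m ≠ 0) (ha : m ∣ a) (hb : m ∣ b) :
    a / m ≡ b / m [ZMOD n] ↔ a ≡ b [ZMOD m * n] := by
  obtain ⟨a, rfl⟩ := ha
  obtain ⟨b, rfl⟩ := hb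
  rw [Int.mul_ediv_cancel_left _ hm, Int.mul_ediv_cancel_left _ hm,
    Int.ModEq.mul_left_cancel_iff' hm]

theorem emultiplicity_two_sq_sub_one_eq {t : ℤ} (ht : Odd t) {b : ℕ}
    (hb : IsLeast {b : ℕ | 0 < b ∧
      ¬(t ≡ 1 [ZMOD (2 ^ b : ℤ)] ∨ t ≡ -1 [ZMOD (2 ^ b : ℤ)])} b) :
    emultiplicity 2 (t ^ 2 - 1) = b := by
  obtain ⟨⟨hb0, hbt⟩, hmin⟩ := hb
  obtain ⟨c, rfl⟩ := Nat.exists_eq_add_of_lt hb0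
  rw [Int.modEq_one_or_neg_one_iff_two_pow_succ_dvd ht] at hbt
  refine emultiplicity_eq_coe.mpr ⟨?_, hbt⟩
  rw [zero_add, ← Int.modEq_one_or_neg_one_iff_two_pow_succ_dvd ht]
  by_contra hc
  rcases Nat.eq_zero_or_pos c with rfl | hc0
  · exact hc (Or.inl Int.modEq_one)
  · exact absurd (hmin ⟨hc0, hc⟩) (by omega)

theorem not_two_pow_add_dvd_pow_sub_one {q : ℤ} {b : ℕ} (hq : 4 ∣ q - 1)
    (hb : emultiplicity 2 (q - 1) = b) {d k : ℕ} (hd0 : d ≠ 0) (hdk : d < 2 ^ k) :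
    ¬ 2 ^ (b + k) ∣ q ^ d - 1 := by
  have hq2 : ¬ 2 ∣ q := fun h2 => by omega
  have hlte := Int.two_pow_sub_pow' d hq hq2
  rw [one_pow, hb] at hlte
  have hdk' : emultiplicity (2 : ℤ) d < k := by
    rw [emultiplicity_lt_iff_not_dvd]
    exact_mod_cast Nat.not_dvd_of_pos_of_lt (Nat.pos_of_ne_zero hd0) hdk
  rw [pow_dvd_iff_le_emultiplicity, hlte, not_le, Nat.cast_add]
  exact (ENat.add_lt_add_iff_left (ENat.natCast_ne_top b)).mpr hdk'

theorem pow_sub_one_ediv_not_modEq {q : ℤ} {b : ℕ} (hq : 4 ∣ q - 1)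
    (hb : emultiplicity 2 (q - 1) = b) (n : ℕ) {d k : ℕ} (hd0 : d ≠ 0) (hdk : d < 2 ^ k) :
    ¬ (q ^ n - 1) / 2 ^ b ≡ (q ^ (n + d) - 1) / 2 ^ b [ZMOD 2 ^ k] := by
  have hdvd (m : ℕ) : (2 : ℤ) ^ b ∣ q ^ m - 1 :=
    (pow_dvd_of_le_emultiplicity hb.ge).trans (sub_one_dvd_pow_sub_one q m)
  rw [Int.ediv_modEq_ediv_iff (by positivity) (hdvd _) (hdvd _), ← pow_add,
    Int.modEq_iff_dvd, sub_sub_sub_cancel_right,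
    show q ^ (n + d) - q ^ n = q ^ n * (q ^ d - 1) by ring]
  have hcop : IsCoprime ((2 : ℤ) ^ (b + k)) (q ^ n) :=
    (Int.isCoprime_two_left.mpr (Int.odd_iff.mpr (by omega)).pow).pow_left
  exact fun h => not_two_pow_add_dvd_pow_sub_one hq hb hd0 hdk (hcop.dvd_of_dvd_mul_left h)

theorem quotients_incongruent (t : ℤ) (ht : Odd t) (b : ℕ)
    (hb : IsLeast {b : ℕ | 0 < b ∧
      ¬(t ≡ 1 [ZMOD (2 ^ b : ℤ)] ∨ t ≡ -1 [ZMOD (2 ^ b : ℤ)])} b) :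
    ∀ k : ℕ, ∀ i : ℕ, ∀ r s : ℕ, r < 2 ^ k → s < 2 ^ k → r ≠ s →
      ¬(((t ^ 2) ^ (i + r) - 1) / 2 ^ b ≡ ((t ^ 2) ^ (i + s) - 1) / 2 ^ b
          [ZMOD (2 ^ k : ℤ)]) := by
  intro k i r s hr hs hrs
  have hq : 4 ∣ t ^ 2 - 1 := dvd_trans (by norm_num) (Int.eight_dvd_sq_sub_one_of_odd ht)
  have hqb := emultiplicity_two_sq_sub_one_eq ht hb
  wlog hlt : r < s generalizing r s
  · exact fun h => this s r hs hr hrs.symm (hrs.lt_or_gt.resolve_left hlt) h.symm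
  obtain ⟨d, rfl⟩ := Nat.exists_eq_add_of_le hlt.le
  rw [← add_assoc]
  exact pow_sub_one_ediv_not_modEq hq hqb (i + r) (by omega) (by omega)
end
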